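/- Progress for references with stores: if t is a closed term with ∅ | Σ ⊢ t : T for a store typing Σ, and μ is a store well typed with respect to Σ, then either t is a value or there exist t' and μ' such that t | μ ⟶ t' | μ'. -/
import Mathlib


/-- Types: unit, function types, and reference types T ref. -/
inductive Ty : Type where
  | unit : Ty
  | arrow : Ty → Ty → Ty
  | ref : Ty → Ty
deriving DecidableEq

/-- Terms: the lambda calculus extended with unit, `ref t`, dereference `$t`,
assignment `t₁ := t₂`, and store locations. -/
inductive Tm : Type where
  | var : String → Tm
  | abs : String → Ty → Tm → Tm
  | app : Tm → Tm → Tm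
  | unit : Tm
  | ref : Tm → Tm
  | deref : Tm → Tm
  | assign : Tm → Tm → Tm
  | loc : Nat → Tm

/-- Values: unit, abstractions, and store locations. -/
inductive Value : Tm → Prop where
  | unit : Value .unit
  | abs : ∀ x T t, Value (.abs x T t)
  | loc : ∀ l, Value (.loc l)

def Ctx : Type := String → Option Ty

def Ctx.update (Γ : Ctx) (x : String) (T : Ty) : Ctx :=
  fun y => if y = x then some T else Γ y

def emptyCtx : Ctx := fun _ => none

/-- Stores map locations to terms (which will be values). -/
abbrev Store : Type := List Tm

/-- Store typings map locations to types. -/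
abbrev StoreTy : Type := List Ty

/-- The typing judgment Γ | S ⊢ t : T with rules T-Var, T-Abs, T-App, T-Unit,
T-Ref, T-Deref, T-Assign, T-Loc. -/
inductive HasType : Ctx → StoreTy → Tm → Ty → Prop where
  | var : ∀ Γ S x T, Γ x = some T → HasType Γ S (.var x) T
  | abs : ∀ Γ S x T₁ T₂ t₂, HasType (Ctx.update Γ x T₁) S t₂ T₂ →
      HasType Γ S (.abs x T₁ t₂) (.arrow T₁ T₂)
  | app : ∀ Γ S t₁ t₂ T₁₁ T₁₂, HasType Γ S t₁ (.arrow T₁₁ T₁₂) → HasType Γ S t₂ T₁₁ →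
      HasType Γ S (.app t₁ t₂) T₁₂
  | unit : ∀ Γ S, HasType Γ S .unit .unit
  | ref : ∀ Γ S t T, HasType Γ S t T → HasType Γ S (.ref t) (.ref T)
  | deref : ∀ Γ S t T, HasType Γ S t (.ref T) → HasType Γ S (.deref t) T
  | assign : ∀ Γ S t₁ t₂ T, HasType Γ S t₁ (.ref T) → HasType Γ S t₂ T →
      HasType Γ S (.assign t₁ t₂) .unit
  | loc : ∀ Γ (S : StoreTy) l (h : l < S.length), HasType Γ S (.loc l) (.ref S[l])

/-- A store μ is well typed with respect to a store typing S: same domain, and each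
stored term is a value of the corresponding type. -/
def StoreWellTyped (μ : Store) (S : StoreTy) : Prop :=
  μ.length = S.length ∧
  ∀ l (h₁ : l < μ.length) (h₂ : l < S.length), Value μ[l] ∧ HasType emptyCtx S μ[l] S[l]

def subst (x : String) (s : Tm) : Tm → Tm
  | .var y => if y = x then s else .var y
  | .abs y T t => if y = x then .abs y T t else .abs y T (subst x s t)
  | .app t₁ t₂ => .app (subst x s t₁) (subst x s t₂)
  | .unit => .unit
  | .ref t => .ref (subst x s t)
  | .deref t => .deref (subst x s t)
  | .assign t₁ t₂ => .assign (subst x s t₁) (subst x s t₂)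
  | .loc l => .loc l

/-- Small-step evaluation over configurations t | μ. -/
inductive Step : Tm → Store → Tm → Store → Prop where
  | app1 : ∀ t₁ t₁' t₂ μ μ', Step t₁ μ t₁' μ' → Step (.app t₁ t₂) μ (.app t₁' t₂) μ'
  | app2 : ∀ v₁ t₂ t₂' μ μ', Value v₁ → Step t₂ μ t₂' μ' → Step (.app v₁ t₂) μ (.app v₁ t₂') μ'
  | appAbs : ∀ x T t₁ v μ, Value v → Step (.app (.abs x T t₁) v) μ (subst x v t₁) μ
  | refCong : ∀ t t' μ μ', Step t μ t' μ' → Step (.ref t) μ (.ref t') μ'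
  | refV : ∀ v μ, Value v → Step (.ref v) μ (.loc μ.length) (μ ++ [v])
  | derefCong : ∀ t t' μ μ', Step t μ t' μ' → Step (.deref t) μ (.deref t') μ'
  | derefLoc : ∀ (μ : Store) l (h : l < μ.length), Step (.deref (.loc l)) μ μ[l] μ
  | assign1 : ∀ t₁ t₁' t₂ μ μ', Step t₁ μ t₁' μ' → Step (.assign t₁ t₂) μ (.assign t₁' t₂) μ'
  | assign2 : ∀ v₁ t₂ t₂' μ μ', Value v₁ → Step t₂ μ t₂' μ' →
      Step (.assign v₁ t₂) μ (.assign v₁ t₂') μ'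
  | assign : ∀ l v (μ : Store), Value v → l < μ.length →
      Step (.assign (.loc l) v) μ .unit (μ.set l v)

lemma canon_arrow {S t T1 T2} (hv : Value t) (ht : HasType emptyCtx S t (.arrow T1 T2)) :
    ∃ x T' t', t = .abs x T' t' := by
  cases hv <;> cases ht
  exact ⟨_, _, _, rfl⟩

lemma canon_ref {S t T} (hv : Value t) (ht : HasType emptyCtx S t (.ref T)) :
    ∃ l, t = .loc l ∧ l < S.length := by
  cases hv <;> cases ht
  exact ⟨_, rfl, ‹_›⟩

/-- Progress for references: a closed well-typed term (w.r.t. a store typing S), evaluated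
in a store well typed w.r.t. S, is a value or can step together with the store. -/
theorem progress_ref (t : Tm) (T : Ty) (S : StoreTy) (μ : Store)
    (ht : HasType emptyCtx S t T) (hμ : StoreWellTyped μ S) :
    Value t ∨ ∃ t' μ', Step t μ t' μ' := by
  generalize hΓ : emptyCtx = Γ at ht
  induction ht with
  | var Γ S x T h => subst hΓ; simp [emptyCtx] at h
  | abs => exact .inl (.abs _ _ _)
  | unit => exact .inl .unit
  | loc => exact .inl (.loc _)
  | app Γ S t₁ t₂ T₁₁ T₁₂ h1 h2 ih1 ih2 =>
    subst hΓ
    rcases ih1 hμ rfl with v1 | ⟨t', μ', hs⟩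
    · rcases ih2 hμ rfl with v2 | ⟨t', μ', hs⟩
      · obtain ⟨x, T', t', rfl⟩ := canon_arrow v1 h1
        exact .inr ⟨_, _, .appAbs _ _ _ _ _ v2⟩
      · exact .inr ⟨_, _, .app2 _ _ _ _ _ v1 hs⟩
    · exact .inr ⟨_, _, .app1 _ _ _ _ _ hs⟩
  | ref Γ S t T h ih =>
    subst hΓ
    rcases ih hμ rfl with v | ⟨t', μ', hs⟩
    · exact .inr ⟨_, _, .refV _ _ v⟩
    · exact .inr ⟨_, _, .refCong _ _ _ _ hs⟩
  | deref Γ S t T h ih =>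
    subst hΓ
    rcases ih hμ rfl with v | ⟨t', μ', hs⟩
    · obtain ⟨l, rfl, hl⟩ := canon_ref v h
      exact .inr ⟨_, _, .derefLoc μ l (hμ.1 ▸ hl)⟩
    · exact .inr ⟨_, _, .derefCong _ _ _ _ hs⟩
  | assign Γ S t₁ t₂ T h1 h2 ih1 ih2 =>
    subst hΓ
    rcases ih1 hμ rfl with v1 | ⟨t', μ', hs⟩
    · rcases ih2 hμ rfl with v2 | ⟨t', μ', hs⟩
      · obtain ⟨l, rfl, hl⟩ := canon_ref v1 h1
        exact .inr ⟨_, _, .assign l _ μ v2 (hμ.1 ▸ hl)⟩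
      · exact .inr ⟨_, _, .assign2 _ _ _ _ _ v1 hs⟩
    · exact .inr ⟨_, _, .assign1 _ _ _ _ _ hs⟩
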